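/- arXiv:1512.06050 — 2 statements merged into one kernel-verified Lean document; each statement's English description precedes it below -/
import Mathlib

section
/- Consider the convex program (P): minimize Σᵢ (PᵢᵀQᵢPᵢ + BᵢᵀPᵢ) subject to Σᵢ Pᵢ = D·d, A·Pᵢ ≤ Rᵢ for all i, and Σᵢ ΓᵢPᵢ ≤ F + Γ_d·d, with Qᵢ positive semidefinite. If (P*, λ*, α*, η*) satisfies the KKT conditions, then for each i, Pᵢ* maximizes the individual profit Pᵢᵀπᵢᵉ − PᵢᵀQᵢPᵢ − BᵢᵀPᵢ + (Rᵢ − APᵢ)ᵀαᵢ* over all Pᵢ satisfying APᵢ ≤ Rᵢ, where πᵢᵉ = λ* − Γᵢᵀη*. -/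
open Matrix

/-- Market equilibrium for the SCED convex program: at a KKT point,
each unit's dispatch `Pᵢ*` maximizes its profit
`Pᵀπᵢᵉ − PᵀQᵢP − BᵢᵀP + (Rᵢ − AP)ᵀαᵢ*` over `{P | AP ≤ Rᵢ}`,
where `πᵢᵉ = λ* − Γᵢᵀη*`. -/
theorem sced_kkt_market_equilibrium
    {N T r L dN : ℕ}
    (Q : Fin N → Matrix (Fin T) (Fin T) ℝ) (B : Fin N → Fin T → ℝ)
    (A : Matrix (Fin r) (Fin T) ℝ) (R : Fin N → Fin r → ℝ)
    (Γ : Fin N → Matrix (Fin L) (Fin T) ℝ)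
    (Γd : Matrix (Fin L) (Fin dN) ℝ) (D : Matrix (Fin T) (Fin dN) ℝ)
    (d : Fin dN → ℝ) (F : Fin L → ℝ)
    (Pstar : Fin N → Fin T → ℝ) (lam : Fin T → ℝ)
    (α : Fin N → Fin r → ℝ) (η : Fin L → ℝ)
    (hQ : ∀ i, (Q i).PosSemidef)
    -- primal feasibility
    (hbal : ∑ i, Pstar i = D.mulVec d)
    (hineq : ∀ i, A.mulVec (Pstar i) ≤ R i)
    (hflow : ∑ i, (Γ i).mulVec (Pstar i) ≤ F + Γd.mulVec d)
    -- dual feasibility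
    (hα : ∀ i, 0 ≤ α i) (hη : 0 ≤ η)
    -- complementary slackness
    (hcsα : ∀ i, dotProduct (α i) (A.mulVec (Pstar i) - R i) = 0)
    (hcsη : dotProduct η
        ((∑ i, (Γ i).mulVec (Pstar i)) - (F + Γd.mulVec d)) = 0)
    -- stationarity: 2QᵢPᵢ* + Bᵢ + Aᵀαᵢ* + Γᵢᵀη* = λ*
    (hstat : ∀ i,
      (2 : ℝ) • (Q i).mulVec (Pstar i) + B i + (Aᵀ).mulVec (α i)
        + ((Γ i)ᵀ).mulVec η = lam) :
    ∀ i, ∀ P : Fin T → ℝ, A.mulVec P ≤ R i →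
      dotProduct P (lam - ((Γ i)ᵀ).mulVec η)
        - dotProduct P ((Q i).mulVec P)
        - dotProduct (B i) P
        + dotProduct (R i - A.mulVec P) (α i)
      ≤ dotProduct (Pstar i) (lam - ((Γ i)ᵀ).mulVec η)
        - dotProduct (Pstar i) ((Q i).mulVec (Pstar i))
        - dotProduct (B i) (Pstar i)
        + dotProduct (R i - A.mulVec (Pstar i)) (α i) := by
  intro i P hP
  have hsym : ∀ x y : Fin T → ℝ,
      dotProduct x ((Q i).mulVec y) = dotProduct y ((Q i).mulVec x) := by
    intro x y
    have hherm : (Q i)ᵀ = Q i := by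
      have := (hQ i).1
      simpa [Matrix.IsHermitian, Matrix.conjTranspose_eq_transpose_of_trivial] using this
    calc dotProduct x ((Q i).mulVec y)
        = dotProduct (Matrix.vecMul x (Q i)) y := Matrix.dotProduct_mulVec _ _ _
      _ = dotProduct ((Q i).mulVec x) y := by rw [← Matrix.mulVec_transpose, hherm]
      _ = dotProduct y ((Q i).mulVec x) := dotProduct_comm _ _
  have hpsd : 0 ≤ dotProduct (Pstar i - P) ((Q i).mulVec (Pstar i - P)) := by
    have := (hQ i).dotProduct_mulVec_nonneg (Pstar i - P)
    simpa using this
  have hAd : ∀ x : Fin T → ℝ, ∀ v : Fin r → ℝ,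
      dotProduct x ((Aᵀ).mulVec v) = dotProduct (A.mulVec x) v := by
    intro x v
    rw [Matrix.mulVec_transpose, dotProduct_comm, ← Matrix.dotProduct_mulVec,
      dotProduct_comm]
  have hlam := hstat i
  have key : ∀ x : Fin T → ℝ,
      dotProduct x (lam - ((Γ i)ᵀ).mulVec η)
        = 2 * dotProduct x ((Q i).mulVec (Pstar i))
          + dotProduct (B i) x + dotProduct (A.mulVec x) (α i) := by
    intro x
    rw [← hlam]
    simp [dotProduct_sub, dotProduct_add, dotProduct_smul,
      hAd, dotProduct_comm x (B i), smul_eq_mul]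
    try ring
  rw [key P, key (Pstar i)]
  have hexp : dotProduct (Pstar i - P) ((Q i).mulVec (Pstar i - P))
      = dotProduct (Pstar i) ((Q i).mulVec (Pstar i))
        - 2 * dotProduct P ((Q i).mulVec (Pstar i))
        + dotProduct P ((Q i).mulVec P) := by
    rw [Matrix.mulVec_sub, dotProduct_sub, sub_dotProduct,
      sub_dotProduct, hsym (Pstar i) P]
    ring
  simp only [sub_dotProduct]
  linarith [hpsd, hexp.symm ▸ hpsd]
end

section
/- Conversely, if U = {ε : Sε ≤ h} is nonempty and bounded, and Gᵢ, Pᵢ satisfy APᵢ + AGᵢε ≤ Rᵢ for all ε ∈ U, then there exists ρᵢ ≥ 0 with ρᵢᵀS = AGᵢ (row-wise) and APᵢ + ρᵢᵀh ≤ Rᵢ. -/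
lemma cone_caratheodory {E : Type*} [AddCommGroup E] [Module ℝ E]
    {ι : Type*} [Fintype ι] [DecidableEq ι] (v : ι → E) (c : ι → ℝ) (hc : ∀ i, 0 ≤ c i) :
    ∃ c' : ι → ℝ, (∀ i, 0 ≤ c' i) ∧ ∑ i, c' i • v i = ∑ i, c i • v i ∧
      LinearIndependent ℝ (fun i : {i // c' i ≠ 0} => v i) := by
  classical
  suffices H : ∀ (N : ℕ) (c : ι → ℝ), (Finset.univ.filter fun i => c i ≠ 0).card ≤ N →
      (∀ i, 0 ≤ c i) →
      ∃ c' : ι → ℝ, (∀ i, 0 ≤ c' i) ∧ ∑ i, c' i • v i = ∑ i, c i • v i ∧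
        LinearIndependent ℝ (fun i : {i // c' i ≠ 0} => v i) by
    exact H _ c le_rfl hc
  intro N
  induction N with
  | zero =>
    intro c hcard hc
    refine ⟨c, hc, rfl, ?_⟩
    have hall : ∀ i, c i = 0 := by
      intro i
      by_contra hi
      have : i ∈ Finset.univ.filter fun i => c i ≠ 0 := by simp [hi]
      have := Finset.card_pos.mpr ⟨i, this⟩
      omega
    have : IsEmpty {i // c i ≠ 0} := ⟨fun ⟨i, hi⟩ => hi (hall i)⟩
    exact linearIndependent_empty_type
  | succ N ih =>
    intro c hcard hc
    by_cases hli : LinearIndependent ℝ (fun i : {i // c i ≠ 0} => v i)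
    · exact ⟨c, hc, rfl, hli⟩
    obtain ⟨g, hg0, j, hgj⟩ := Fintype.not_linearIndependent_iff.mp hli
    -- extend g to all of ι
    set d : ι → ℝ := fun i => if hi : c i ≠ 0 then g ⟨i, hi⟩ else 0 with hd
    have hdsum : ∑ i, d i • v i = 0 := by
      have h1 : ∑ i, d i • v i
          = ∑ x ∈ Finset.univ.filter (fun i => c i ≠ 0), d x • v x := by
        refine (Finset.sum_subset (Finset.subset_univ _) ?_).symm
        intro x _ hx
        simp only [Finset.mem_filter, Finset.mem_univ, true_and] at hx
        push_neg at hx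
        simp [hd, hx]
      have h2 : ∑ x ∈ Finset.univ.filter (fun i => c i ≠ 0), d x • v x
          = ∑ i : {i // c i ≠ 0}, d (i : ι) • v (i : ι) :=
        Finset.sum_subtype _ (by simp) _
      rw [h1, h2, ← hg0]
      refine Finset.sum_congr rfl fun i _ => ?_
      have : d (i : ι) = g i := dif_pos i.2
      rw [this]
    have hdc : ∀ i, d i ≠ 0 → c i ≠ 0 := by
      intro i hi
      by_contra hci
      simp [hd, hci] at hi
    have hdj : d (j : ι) ≠ 0 := by
      have : d (j : ι) = g j := dif_pos j.2
      rw [this]; exact hgj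
    -- get a direction with a positive entry
    obtain ⟨e, hesum, hec, i1, hi1⟩ :
        ∃ e : ι → ℝ, ∑ i, e i • v i = 0 ∧ (∀ i, e i ≠ 0 → c i ≠ 0) ∧ ∃ i, 0 < e i := by
      rcases lt_or_gt_of_ne hdj with hneg | hpos
      · exact ⟨-d, by simp [hdsum], fun i hi => hdc i (by simpa using hi), j, by
          simpa using hneg⟩
      · exact ⟨d, hdsum, hdc, j, hpos⟩
    have hPos : ((Finset.univ.filter fun i => 0 < e i)).Nonempty := ⟨i1, by simp [hi1]⟩
    obtain ⟨i0, hi0mem, hmin⟩ :=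
      Finset.exists_min_image _ (fun i => c i / e i) hPos
    simp only [Finset.mem_filter, Finset.mem_univ, true_and] at hi0mem
    set t : ℝ := c i0 / e i0 with ht
    have hts : 0 ≤ t := div_nonneg (hc i0) hi0mem.le
    set c'' : ι → ℝ := fun i => c i - t * e i with hc''
    have hc''nn : ∀ i, 0 ≤ c'' i := by
      intro i
      rcases le_or_gt (e i) 0 with hei | hei
      · have : t * e i ≤ 0 := mul_nonpos_of_nonneg_of_nonpos hts hei
        simp only [hc'']
        linarith [hc i]
      · have h2 : t ≤ c i / e i := hmin i (by simp [hei])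
        have h3 : t * e i ≤ c i := by
          rw [ht] at h2 ⊢
          calc c i0 / e i0 * e i ≤ c i / e i * e i := by
                exact mul_le_mul_of_nonneg_right h2 hei.le
            _ = c i := div_mul_cancel₀ _ hei.ne'
        simp only [hc'']
        linarith
    have hc''sum : ∑ i, c'' i • v i = ∑ i, c i • v i := by
      simp only [hc'', sub_smul, Finset.sum_sub_distrib, mul_smul]
      rw [← Finset.smul_sum, hesum, smul_zero, sub_zero]
    have hc''sub : (Finset.univ.filter fun i => c'' i ≠ 0)
        ⊂ Finset.univ.filter fun i => c i ≠ 0 := by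
      refine Finset.ssubset_iff_of_subset ?_ |>.mpr ?_
      · intro i hi
        simp only [Finset.mem_filter, Finset.mem_univ, true_and] at hi ⊢
        intro hci
        apply hi
        have hei : e i = 0 := by
          by_contra hei
          exact hec i hei hci
        simp [hc'', hci, hei]
      · refine ⟨i0, ?_, ?_⟩
        · simp only [Finset.mem_filter, Finset.mem_univ, true_and]
          exact hec i0 hi0mem.ne' 
        · simp only [Finset.mem_filter, Finset.mem_univ, true_and, not_not]
          simp [hc'', ht, div_mul_cancel₀ _ hi0mem.ne']
    have hcard' : (Finset.univ.filter fun i => c'' i ≠ 0).card ≤ N := by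
      have := Finset.card_lt_card hc''sub
      omega
    obtain ⟨c', h1, h2, h3⟩ := ih c'' hcard' hc''nn
    exact ⟨c', h1, by rw [h2, hc''sum], h3⟩

lemma piLp_sum_apply {κ : Type*} [Fintype κ] {ι : Type*} (s : Finset ι)
    (f : ι → EuclideanSpace ℝ κ) (o : κ) : (∑ i ∈ s, f i) o = ∑ i ∈ s, f i o := by
  classical
  induction s using Finset.cons_induction with
  | empty => rfl
  | cons a s ha ih => rw [Finset.sum_cons, Finset.sum_cons, PiLp.add_apply, ih]

lemma cone_isClosed {κ : Type*} [Fintype κ] {ι : Type*} [Fintype ι] [DecidableEq ι]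
    (v : ι → EuclideanSpace ℝ κ) :
    IsClosed {x : EuclideanSpace ℝ κ | ∃ c : ι → ℝ, (∀ i, 0 ≤ c i) ∧ x = ∑ i, c i • v i} := by
  classical
  have hset : {x : EuclideanSpace ℝ κ | ∃ c : ι → ℝ, (∀ i, 0 ≤ c i) ∧ x = ∑ i, c i • v i}
      = ⋃ (t : Finset ι) (_ : LinearIndependent ℝ (fun i : t => v (i : ι))),
        (fun c : t → ℝ => ∑ i, c i • v (i : ι)) '' {c | ∀ i, 0 ≤ c i} := by
    ext x
    simp only [Set.mem_setOf_eq, Set.mem_iUnion, Set.mem_image]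
    constructor
    · rintro ⟨c, hc, rfl⟩
      obtain ⟨c', hc', hsum, hli⟩ := cone_caratheodory v c hc
      refine ⟨Finset.univ.filter fun i => c' i ≠ 0, ?_, fun i => c' i, fun i => hc' i, ?_⟩
      · have h := (linearIndependent_equiv (Equiv.subtypeEquivRight
          (p := fun i : ι => i ∈ Finset.univ.filter fun i => c' i ≠ 0)
          (q := fun i : ι => c' i ≠ 0) (by simp))).mpr hli
        simpa [Function.comp_def, Equiv.subtypeEquivRight_apply] using h
      · rw [← hsum]
        rw [Finset.sum_coe_sort (Finset.univ.filter fun i => c' i ≠ 0)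
          (fun x => c' x • v x)]
        refine Finset.sum_subset (Finset.subset_univ _) ?_
        intro x _ hx
        simp only [Finset.mem_filter, Finset.mem_univ, true_and, not_not] at hx
        simp [hx]
    · rintro ⟨t, hli, c, hc, rfl⟩
      refine ⟨fun i => if hi : i ∈ t then c ⟨i, hi⟩ else 0, ?_, ?_⟩
      · intro i
        by_cases hi : i ∈ t
        · simpa [hi] using hc ⟨i, hi⟩
        · simp [hi]
      · have h1 : ∑ i : ι, (if hi : i ∈ t then c ⟨i, hi⟩ else 0) • v i
            = ∑ x ∈ t, (if hx : x ∈ t then c ⟨x, hx⟩ else 0) • v x := by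
          refine (Finset.sum_subset (Finset.subset_univ _) ?_).symm
          intro x _ hx
          simp [hx]
        rw [h1, ← Finset.sum_coe_sort t (fun x => (if hx : x ∈ t then c ⟨x, hx⟩ else 0) • v x)]
        exact (Finset.sum_congr rfl fun i _ => by rw [dif_pos i.2]).symm
  rw [hset]
  refine isClosed_iUnion_of_finite fun t => ?_
  haveI : Finite (LinearIndependent ℝ fun i : t => v (i : ι)) := by
    infer_instance
  refine isClosed_iUnion_of_finite fun hli => ?_
  -- image of the nonnegative orthant under an injective linear map
  let f : ({x // x ∈ t} → ℝ) →ₗ[ℝ] EuclideanSpace ℝ κ :=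
    { toFun := fun c => ∑ i, c i • v (i : ι)
      map_add' := by intro a b; simp [add_smul, Finset.sum_add_distrib]
      map_smul' := by intro r a; simp [smul_smul, Finset.smul_sum] }
  have hker : LinearMap.ker f = ⊥ := by
    rw [LinearMap.ker_eq_bot']
    intro c hc
    funext i
    exact Fintype.linearIndependent_iff.mp hli c hc i
  have hemb := LinearMap.isClosedEmbedding_of_injective (𝕜 := ℝ) hker
  have horth : IsClosed {c : {x // x ∈ t} → ℝ | ∀ i, 0 ≤ c i} := by
    have : {c : {x // x ∈ t} → ℝ | ∀ i, 0 ≤ c i} = ⋂ i, {c | 0 ≤ c i} := by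
      ext; simp [Set.mem_iInter]
    rw [this]
    exact isClosed_iInter fun i => isClosed_le continuous_const (continuous_apply i)
  exact hemb.isClosedMap _ horth

open scoped InnerProductSpace in
lemma farkas_row {m k : ℕ} (S : Matrix (Fin k) (Fin m) ℝ) (h : Fin k → ℝ)
    (c : Fin m → ℝ) (d : ℝ)
    (hne : ∃ ε : Fin m → ℝ, S.mulVec ε ≤ h)
    (hub : ∀ ε : Fin m → ℝ, S.mulVec ε ≤ h → ∑ i, c i * ε i ≤ d) :
    ∃ y : Fin k → ℝ, (∀ l, 0 ≤ y l) ∧ (∀ i, ∑ l, y l * S l i = c i) ∧ ∑ l, y l * h l ≤ d := by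
  classical
  set E := EuclideanSpace ℝ (Option (Fin m)) with hE
  -- generators: one per row of S (augmented with h), plus the extra vector e_none
  set v : Option (Fin k) → E := fun l => match l with
    | some l => WithLp.toLp 2 (fun o => Option.elim o (h l) (fun i => S l i) : Option (Fin m) → ℝ)
    | none => WithLp.toLp 2 (fun o => Option.elim o 1 (fun _ => 0) : Option (Fin m) → ℝ)
    with hv
  set C : Set E := {x | ∃ cc : Option (Fin k) → ℝ, (∀ i, 0 ≤ cc i) ∧ x = ∑ i, cc i • v i}
    with hC
  set b : E := WithLp.toLp 2 (fun o => Option.elim o d (fun i => c i) : Option (Fin m) → ℝ) with hb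
  have hsum_coord : ∀ (cc : Option (Fin k) → ℝ) (o : Option (Fin m)),
      (∑ i, cc i • v i) o = ∑ i, cc i * v i o := by
    intro cc o
    rw [piLp_sum_apply]
    exact Finset.sum_congr rfl fun i _ => rfl
  by_cases hbC : b ∈ C
  · obtain ⟨cc, hcc, hccsum⟩ := hbC
    refine ⟨fun l => cc (some l), fun l => hcc _, ?_, ?_⟩
    · intro i
      have : b (some i) = (∑ j, cc j • v j) (some i) := by rw [hccsum]
      rw [hsum_coord] at this
      simp only [hb, PiLp.toLp_apply] at this
      rw [Fintype.sum_option] at this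
      simpa [hv, mul_comm] using this.symm
    · have : b none = (∑ j, cc j • v j) none := by rw [hccsum]
      rw [hsum_coord] at this
      simp only [hb, PiLp.toLp_apply] at this
      rw [Fintype.sum_option] at this
      simp only [hv, Option.elim, PiLp.toLp_apply] at this
      have h0 : 0 ≤ cc none := hcc none
      calc ∑ l, cc (some l) * h l ≤ cc none * 1 + ∑ l, cc (some l) * h l := by linarith
        _ = d := this.symm
  · exfalso
    -- build the convex cone and separate
    have hCzero : (0 : E) ∈ C := ⟨fun _ => 0, fun _ => le_rfl, by simp⟩
    have hCsmul : ∀ (r : ℝ), 0 < r → ∀ x ∈ C, r • x ∈ C := by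
      rintro r hr x ⟨cc, hcc, rfl⟩
      exact ⟨fun i => r * cc i, fun i => mul_nonneg hr.le (hcc i),
        by rw [Finset.smul_sum]; exact Finset.sum_congr rfl fun i _ => smul_smul _ _ _⟩
    have hCadd : ∀ x ∈ C, ∀ y ∈ C, x + y ∈ C := by
      rintro x ⟨cx, hcx, rfl⟩ y ⟨cy, hcy, rfl⟩
      exact ⟨fun i => cx i + cy i, fun i => add_nonneg (hcx i) (hcy i),
        by rw [← Finset.sum_add_distrib]; exact Finset.sum_congr rfl fun i _ =>
          (add_smul _ _ _).symm⟩
    let K : ConvexCone ℝ E :=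
      { carrier := C
        smul_mem' := fun {r} hr {x} hx => hCsmul r hr x hx
        add_mem' := fun {x} hx {y} hy => hCadd x hx y hy }
    have hgen : ∀ i0 : Option (Fin k), v i0 ∈ C := by
      intro i0
      refine ⟨fun i => if i = i0 then 1 else 0, fun i => by positivity, ?_⟩
      simp [ite_smul]
    let K' : ProperCone ℝ E :=
      { carrier := C
        add_mem' := fun {x} {y} hx hy => hCadd x hx y hy
        zero_mem' := hCzero
        smul_mem' := by
          rintro c x ⟨cc, hcc, rfl⟩
          exact ⟨fun i => (c : ℝ) * cc i, fun i => mul_nonneg c.2 (hcc i),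
            by change (c : ℝ) • ∑ i, cc i • v i = _
               rw [Finset.smul_sum]
               exact Finset.sum_congr rfl fun i _ => smul_smul _ _ _⟩
        isClosed' := cone_isClosed v }
    obtain ⟨w, hw, hwb⟩ := ProperCone.hyperplane_separation' K' (x₀ := b) hbC
    set s : ℝ := w none with hs
    set u : Fin m → ℝ := fun i => w (some i) with hu
    have hinner : ∀ x : E, ⟪x, w⟫_ℝ = x none * s + ∑ i, x (some i) * u i := by
      intro x
      rw [PiLp.inner_apply, Fintype.sum_option]
      simp [hs, hu, mul_comm]
    have hvl : ∀ l, 0 ≤ h l * s + ∑ i, S l i * u i := by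
      intro l
      have := hw _ (hgen (some l))
      rwa [hinner] at this
    have hs0 : 0 ≤ s := by
      have := hw _ (hgen none)
      rw [hinner] at this
      have h1 : v none none = 1 := rfl
      have h2 : ∀ x : Fin m, v none (some x) = 0 := fun _ => rfl
      simpa [h1, h2] using this
    have hwb' : d * s + ∑ i, c i * u i < 0 := by
      have : ⟪b, w⟫_ℝ < 0 := hwb
      rwa [hinner] at this
    rcases eq_or_lt_of_le hs0 with hseq | hslt
    · -- s = 0 : unbounded direction, contradiction with hub
      obtain ⟨ε₀, hε₀⟩ := hne
      have hcu : ∑ i, c i * u i < 0 := by rw [← hseq] at hwb'; simpa using hwb'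
      have hSu : ∀ l, 0 ≤ ∑ i, S l i * u i := by
        intro l; have := hvl l; rw [← hseq] at this; simpa using this
      set tt : ℝ := max 0 ((d + 1 - ∑ i, c i * ε₀ i) / (-(∑ i, c i * u i))) with htt
      have htt0 : 0 ≤ tt := le_max_left _ _
      have hfeas : S.mulVec (ε₀ - tt • u) ≤ h := by
        intro l
        have : S.mulVec (ε₀ - tt • u) l = S.mulVec ε₀ l - tt * S.mulVec u l := by
          rw [Matrix.mulVec_sub, Matrix.mulVec_smul]
          simp [smul_eq_mul]
        rw [this]
        have h1 : 0 ≤ tt * S.mulVec u l := by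
          refine mul_nonneg htt0 ?_
          simpa [Matrix.mulVec, dotProduct] using hSu l
        have := hε₀ l
        linarith
      have := hub _ hfeas
      have hexp : ∑ i, c i * (ε₀ - tt • u) i
          = ∑ i, c i * ε₀ i - tt * ∑ i, c i * u i := by
        rw [Finset.mul_sum, ← Finset.sum_sub_distrib]
        refine Finset.sum_congr rfl fun i _ => by simp [Pi.sub_apply]; ring
      rw [hexp] at this
      have hbig : tt * (-(∑ i, c i * u i)) ≥ d + 1 - ∑ i, c i * ε₀ i := by
        rcases le_or_gt (d + 1 - ∑ i, c i * ε₀ i) 0 with hle | hgt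
        · have : 0 ≤ tt * (-(∑ i, c i * u i)) := mul_nonneg htt0 (by linarith)
          linarith
        · have hne' : 0 < -(∑ i, c i * u i) := by linarith
          have : (d + 1 - ∑ i, c i * ε₀ i) / (-(∑ i, c i * u i)) ≤ tt := le_max_right _ _
          calc d + 1 - ∑ i, c i * ε₀ i
              = ((d + 1 - ∑ i, c i * ε₀ i) / (-(∑ i, c i * u i))) * (-(∑ i, c i * u i)) :=
                (div_mul_cancel₀ _ hne'.ne').symm
            _ ≤ tt * (-(∑ i, c i * u i)) := mul_le_mul_of_nonneg_right this hne'.le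
      nlinarith
    · -- s > 0 : rescale to get a feasible point violating the bound
      have hdivsum : ∀ f : Fin m → ℝ, ∑ x, f x * (-u x / s) = (-∑ x, f x * u x) / s := by
        intro f
        calc ∑ x, f x * (-u x / s) = ∑ x, -(f x * u x) / s :=
              Finset.sum_congr rfl fun x _ => by ring
          _ = (∑ x, -(f x * u x)) / s := by rw [Finset.sum_div]
          _ = (-∑ x, f x * u x) / s := by rw [Finset.sum_neg_distrib]
      set ε : Fin m → ℝ := fun i => -u i / s with hε
      have hfeas : S.mulVec ε ≤ h := by
        intro l
        have : S.mulVec ε l = (-(∑ i, S l i * u i)) / s := by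
          simp only [Matrix.mulVec, dotProduct, hε]
          exact hdivsum (fun i => S l i)
        rw [this, div_le_iff₀ hslt]
        have := hvl l
        nlinarith
      have := hub _ hfeas
      have hval : ∑ i, c i * ε i = (-(∑ i, c i * u i)) / s := by
        simp only [hε]
        exact hdivsum c
      rw [hval, div_le_iff₀ hslt] at this
      nlinarith

/-- Exactness of the robust reformulation: if `U = {ε | Sε ≤ h}` is nonempty
and bounded, and `APᵢ + AGᵢε ≤ Rᵢ` for all `ε ∈ U`, then there exists `ρᵢ ≥ 0`
with `ρᵢS = AGᵢ` and `APᵢ + ρᵢh ≤ Rᵢ`. -/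
theorem robust_reformulation_exact
    {T m k r : ℕ}
    (P : Fin T → ℝ) (G : Matrix (Fin T) (Fin m) ℝ)
    (A : Matrix (Fin r) (Fin T) ℝ) (R : Fin r → ℝ)
    (S : Matrix (Fin k) (Fin m) ℝ) (h : Fin k → ℝ)
    (hne : ∃ ε : Fin m → ℝ, S.mulVec ε ≤ h)
    (hbdd : Bornology.IsBounded {ε : Fin m → ℝ | S.mulVec ε ≤ h})
    (hrob : ∀ ε : Fin m → ℝ, S.mulVec ε ≤ h →
      A.mulVec P + (A * G).mulVec ε ≤ R) :
    ∃ ρ : Matrix (Fin r) (Fin k) ℝ,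
      (∀ j l, 0 ≤ ρ j l) ∧ ρ * S = A * G ∧
      A.mulVec P + ρ.mulVec h ≤ R := by
  have H : ∀ j : Fin r, ∃ y : Fin k → ℝ, (∀ l, 0 ≤ y l) ∧
      (∀ i, ∑ l, y l * S l i = (A * G) j i) ∧
      ∑ l, y l * h l ≤ R j - A.mulVec P j := by
    intro j
    refine farkas_row S h (fun i => (A * G) j i) (R j - A.mulVec P j) hne ?_
    intro ε hε
    have := hrob ε hε j
    simp only [Pi.add_apply] at this
    have hexp : (A * G).mulVec ε j = ∑ i, (A * G) j i * ε i := by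
      simp [Matrix.mulVec, dotProduct]
    linarith [hexp ▸ this]
  choose y hy1 hy2 hy3 using H
  refine ⟨fun j l => y j l, fun j l => hy1 j l, ?_, ?_⟩
  · ext j i
    exact hy2 j i
  · intro j
    have h1 : Matrix.mulVec (fun j l => y j l) h j = ∑ l, y j l * h l := by
      simp [Matrix.mulVec, dotProduct]
    have := hy3 j
    simp only [Pi.add_apply, h1]
    linarith
end
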